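/- Let d ≥ 2 be an integer and let f_d ∈ ℤ[x] be the Dickson polynomial of degree d with parameter 1, characterized by the identity f_d(x + x^{−1}) = x^d + x^{−d} for all nonzero x. Let L be a finite field and let z ∈ L be nonzero. Then z is periodic under the map w ↦ w^d on L if and only if z + z^{−1} is periodic under the map w ↦ f_d(w) on L (where f_d is evaluated in L via the canonical ring map ℤ → L). -/
import Mathlib


/-- Let `f_d` be the Dickson polynomial of the first kind of degree `d`
with parameter `1` (so `f_d (x + x⁻¹) = x^d + x^{-d}`).  In a finite field `L`, a nonzero
`z` is periodic under `w ↦ w^d` iff `z + z⁻¹` is periodic under `w ↦ f_d(w)`. -/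
theorem dickson_periodic_iff_power_periodic (d : ℕ) (hd : 2 ≤ d)
    {L : Type*} [Field L] [Finite L] (z : L) (hz : z ≠ 0) :
    (∃ m : ℕ, 0 < m ∧ (fun w => w ^ d)^[m] z = z) ↔
      (∃ m : ℕ, 0 < m ∧
        (fun w => ((Polynomial.dickson 1 (1 : ℤ) d).map (Int.castRingHom L)).eval w)^[m]
          (z + z⁻¹) = z + z⁻¹) := by
  have hmap : (Polynomial.dickson 1 (1 : ℤ) d).map (Int.castRingHom L)
      = Polynomial.dickson 1 (1 : L) d := by
    rw [Polynomial.map_dickson]; norm_num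
  have hpow : ∀ m : ℕ, (fun w : L => w ^ d)^[m] z = z ^ d ^ m := by
    intro m
    induction m with
    | zero => simp
    | succ n ih => rw [Function.iterate_succ_apply', ih, ← pow_mul, pow_succ]
  have hzp : ∀ m : ℕ, z ^ d ^ m ≠ 0 := fun m => pow_ne_zero _ hz
  have hiter : ∀ m : ℕ,
      (fun w => ((Polynomial.dickson 1 (1 : ℤ) d).map (Int.castRingHom L)).eval w)^[m]
        (z + z⁻¹) = z ^ d ^ m + (z ^ d ^ m)⁻¹ := by
    intro m
    induction m with
    | zero => simp
    | succ n ih =>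
      rw [Function.iterate_succ_apply', ih, hmap,
        Polynomial.dickson_one_one_eval_add_inv _ _ (mul_inv_cancel₀ (hzp n)),
        inv_pow, ← pow_mul, ← pow_succ]
  constructor
  · rintro ⟨m, hm, h⟩
    refine ⟨m, hm, ?_⟩
    rw [hpow m] at h
    rw [hiter, h]
  · rintro ⟨m, hm, h⟩
    rw [hiter] at h
    have key : z ^ d ^ m = z ∨ z ^ d ^ m = z⁻¹ := by
      set a := z ^ d ^ m with ha
      have ha0 : a ≠ 0 := hzp m
      have h1 : a * z * (a + a⁻¹) = a * z * (z + z⁻¹) := by rw [h]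
      have e1 : a * z * (a + a⁻¹) = a * a * z + z * (a * a⁻¹) := by ring
      have e2 : a * z * (z + z⁻¹) = a * z * z + a * (z * z⁻¹) := by ring
      rw [e1, e2, mul_inv_cancel₀ ha0, mul_inv_cancel₀ hz] at h1
      have h3 : (a - z) * (a * z - 1) = 0 := by linear_combination h1
      rcases mul_eq_zero.1 h3 with h4 | h4
      · exact Or.inl (by linear_combination h4)
      · exact Or.inr (eq_inv_of_mul_eq_one_left (by linear_combination h4))
    rcases key with hk | hk
    · exact ⟨m, hm, by rw [hpow, hk]⟩
    · refine ⟨2 * m, by omega, ?_⟩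
      rw [hpow, two_mul, pow_add, pow_mul, hk, inv_pow, hk, inv_inv]
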